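/- In the m-gluing graph K_n +_m K'_n with n ≥ 5 and 1 ≤ m ≤ n−2: (1) for u_1 ∈ Γ_m(v_0) and u_i ∈ Γ_m(v_0) with i ≠ 1, κ(u_1, u_i) = (n−1)/n; (2) for u_1 ∈ Γ_m(v_0) and u' ∈ V(K_n) \ (Γ_m(v_0) ∪ {u_0}), κ(u_1, u') = (n−2)/n; (3) for distinct u', u'' ∈ V(K_n) \ (Γ_m(v_0) ∪ {u_0}), κ(u', u'') = (n−2)/(n−1). -/

import Mathlib

open scoped Classical
noncomputable section

namespace OR

variable {V : Type*}

/-- The degree of a vertex. -/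
def deg (G : SimpleGraph V) (x : V) : ℕ := Nat.card (G.neighborSet x)

/-- The simple random walk measure at a vertex. -/
def rw (G : SimpleGraph V) (x : V) : V → ℝ :=
  fun v => if G.Adj x v then ((deg G x : ℝ))⁻¹ else 0

/-- A coupling between two measures on the vertex set. -/
def IsCoupling (μ ν : V → ℝ) (A : V → V → ℝ) : Prop :=
  (∀ u v, 0 ≤ A u v) ∧
  (Function.support fun p : V × V => A p.1 p.2).Finite ∧
  (∀ u, ∑ᶠ v, A u v = μ u) ∧ (∀ v, ∑ᶠ u, A u v = ν v)

/-- The 1-Wasserstein distance w.r.t. the graph distance. -/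
def W (G : SimpleGraph V) (μ ν : V → ℝ) : ℝ :=
  sInf { r | ∃ A, IsCoupling μ ν A ∧ r = ∑ᶠ u, ∑ᶠ v, A u v * (G.dist u v : ℝ) }

/-- The Ollivier–Ricci curvature. -/
def ricci (G : SimpleGraph V) (x y : V) : ℝ :=
  1 - W G (rw G x) (rw G y) / (G.dist x y : ℝ)

/-- The number of common neighbours of `x` and `y`. -/
def tri (G : SimpleGraph V) (x y : V) : ℕ := Nat.card {w | G.Adj x w ∧ G.Adj y w}



/-- Condition for a cross edge `u_i v_j` in the `m`-gluing graph. -/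
def cross (m : ℕ) {n : ℕ} (i j : Fin n) : Prop :=
  ((i : ℕ) = 0 ∧ (j : ℕ) = 0) ∨ ((i : ℕ) = 0 ∧ 1 ≤ (j : ℕ) ∧ (j : ℕ) ≤ m) ∨
    ((j : ℕ) = 0 ∧ 1 ≤ (i : ℕ) ∧ (i : ℕ) ≤ m)

/-- Adjacency of the `m`-gluing graph: `Sum.inl` is `K_n`, `Sum.inr` is `K'_n`. -/
def glueAdj (n m : ℕ) : Fin n ⊕ Fin n → Fin n ⊕ Fin n → Prop
  | .inl i, .inl j => i ≠ j
  | .inr i, .inr j => i ≠ j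
  | .inl i, .inr j => cross m i j
  | .inr j, .inl i => cross m i j

/-- The `m`-gluing graph `K_n +_m K'_n`. -/
def glue (n m : ℕ) : SimpleGraph (Fin n ⊕ Fin n) where
  Adj := glueAdj n m
  symm := by
    refine ⟨?_⟩
    rintro (i | i) (j | j) h <;> simp only [glueAdj] at h ⊢
    · exact h.symm
    · exact h
    · exact h
    · exact h.symm
  loopless := by
    refine ⟨?_⟩
    rintro (i | i) h <;> simp only [glueAdj] at h <;> exact h rfl

end OR

/-! For adjacent `x`, `y` the curvature is `1 - W(m_x, m_y)`, and in each case `W` is computed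
exactly: a transport plan moving mass only along edges gives the upper bound, and a potential with
values in `[0, 1]` (hence 1-Lipschitz) matches its cost by weak Kantorovich duality.
In cases (1) and (3) the two vertices have the same neighbours apart from each other and the same
degree `d`, so only the mass `1/d` sitting on one of them must move, and `W = 1/d`.
In case (2), `u_1` sees everything `u'` sees plus `v_0`, with degree `n` against `n - 1`: sending
the mass at `v_0` to `u_1` and spreading the mass at `u'` evenly over its neighbours costs `2/n`,
and the indicator of `{u', v_0}` shows this is optimal. -/

namespace OR

variable {V : Type*} {G : SimpleGraph V}

theorem sub_le_dist_of_mem_Icc (hG : G.Connected) {f : V → ℝ} (hf : ∀ u, f u ∈ Set.Icc 0 1)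
    (u v : V) : f u - f v ≤ G.dist u v := by
  rcases eq_or_ne u v with rfl | huv
  · simp
  · have : (1 : ℝ) ≤ G.dist u v := mod_cast hG.pos_dist_of_ne huv
    linarith [(hf u).2, (hf v).1]

theorem mul_dist_eq_self {a : ℝ} {u v : V} (h : a ≠ 0 → G.Adj u v) : a * G.dist u v = a := by
  by_cases ha : a = 0
  · simp [ha]
  · simp [SimpleGraph.dist_eq_one_iff_adj.mpr (h ha)]

theorem rw_of_adj {x v : V} (h : G.Adj x v) : rw G x v = (deg G x : ℝ)⁻¹ := if_pos h

theorem rw_of_not_adj {x v : V} (h : ¬G.Adj x v) : rw G x v = 0 := if_neg h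

theorem rw_nonneg (x v : V) : 0 ≤ rw G x v := by
  unfold rw; split_ifs <;> positivity

theorem deg_eq_degree [Fintype V] (x : V) : deg G x = G.degree x := by
  rw [deg, Nat.card_eq_fintype_card, SimpleGraph.card_neighborSet_eq_degree]

theorem sum_rw [Fintype V] {x y : V} (h : G.Adj x y) : ∑ v, rw G x v = 1 := by
  have hdeg : (G.degree x : ℝ) ≠ 0 :=
    Nat.cast_ne_zero.mpr ((G.degree_pos_iff_exists_adj x).mpr ⟨y, h⟩).ne'
  simp [rw, Finset.sum_ite, deg_eq_degree, ← SimpleGraph.neighborFinset_eq_filter, hdeg]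

theorem ricci_eq_one_sub_W_of_adj {x y : V} (h : G.Adj x y) :
    ricci G x y = 1 - W G (rw G x) (rw G y) := by
  rw [ricci, SimpleGraph.dist_eq_one_iff_adj.mpr h, Nat.cast_one, div_one]

section Transport

variable [Fintype V]

theorem IsCoupling.sum_row {μ ν : V → ℝ} {A : V → V → ℝ} (hA : IsCoupling μ ν A) (u : V) :
    ∑ v, A u v = μ u := by
  rw [← finsum_eq_sum_of_fintype]; exact hA.2.2.1 u

theorem IsCoupling.sum_col {μ ν : V → ℝ} {A : V → V → ℝ} (hA : IsCoupling μ ν A) (v : V) :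
    ∑ u, A u v = ν v := by
  rw [← finsum_eq_sum_of_fintype]; exact hA.2.2.2 v

theorem IsCoupling.of_sum {μ ν : V → ℝ} {A : V → V → ℝ} (h0 : ∀ u v, 0 ≤ A u v)
    (hrow : ∀ u, ∑ v, A u v = μ u) (hcol : ∀ v, ∑ u, A u v = ν v) : IsCoupling μ ν A :=
  ⟨h0, Set.toFinite _, fun u => by rw [finsum_eq_sum_of_fintype, hrow],
    fun v => by rw [finsum_eq_sum_of_fintype, hcol]⟩

/-- Weak Kantorovich duality. -/
theorem sum_potential_le_cost {μ ν : V → ℝ} {A : V → V → ℝ} (hA : IsCoupling μ ν A)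
    {f : V → ℝ} (hf : ∀ u v, f u - f v ≤ G.dist u v) :
    ∑ u, f u * (μ u - ν u) ≤ ∑ u, ∑ v, A u v * G.dist u v :=
  calc ∑ u, f u * (μ u - ν u) = ∑ u, ∑ v, A u v * (f u - f v) := by
        simp only [mul_sub, Finset.sum_sub_distrib, ← hA.sum_row, ← hA.sum_col,
          Finset.mul_sum]
        congr 1
        · simp only [mul_comm]
        · rw [Finset.sum_comm]; simp only [mul_comm]
    _ ≤ ∑ u, ∑ v, A u v * G.dist u v := by
        gcongr with u _ v _
        exacts [hA.1 u v, hf u v]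

theorem W_eq_of_cost_eq {μ ν : V → ℝ} {A : V → V → ℝ} (hA : IsCoupling μ ν A)
    {f : V → ℝ} (hf : ∀ u v, f u - f v ≤ G.dist u v)
    (hcost : ∑ u, ∑ v, A u v * G.dist u v = ∑ u, f u * (μ u - ν u)) :
    W G μ ν = ∑ u, f u * (μ u - ν u) := by
  have hmem : ∑ u, f u * (μ u - ν u) ∈
      { r | ∃ A, IsCoupling μ ν A ∧ r = ∑ᶠ u, ∑ᶠ v, A u v * (G.dist u v : ℝ) } :=
    ⟨A, hA, by simp only [finsum_eq_sum_of_fintype, hcost]⟩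
  have hlow : ∑ u, f u * (μ u - ν u) ∈ lowerBounds
      { r | ∃ A, IsCoupling μ ν A ∧ r = ∑ᶠ u, ∑ᶠ v, A u v * (G.dist u v : ℝ) } := by
    rintro _ ⟨B, hB, rfl⟩
    simpa only [finsum_eq_sum_of_fintype] using sum_potential_le_cost hB hf
  exact le_antisymm (csInf_le ⟨_, hlow⟩ hmem) (le_csInf ⟨_, hmem⟩ hlow)

/-- The coupling keeps `μ u - ∑ v, T u v` in place at every `u` and moves the rest along `T`. -/
theorem W_eq_of_transport (hG : G.Connected) {μ ν : V → ℝ} (T : V → V → ℝ) (f : V → ℝ)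
    (hT : ∀ u v, 0 ≤ T u v) (hTadj : ∀ u v, T u v ≠ 0 → G.Adj u v)
    (hrow : ∀ u, ∑ v, T u v ≤ μ u) (hbal : ∀ u, μ u - ∑ v, T u v = ν u - ∑ v, T v u)
    (hf : ∀ u, f u ∈ Set.Icc 0 1) (hdual : ∑ u, f u * (μ u - ν u) = ∑ u, ∑ v, T u v) :
    W G μ ν = ∑ u, ∑ v, T u v := by
  set A : V → V → ℝ := fun u v => (if u = v then μ u - ∑ w, T u w else 0) + T u v
  have hA : IsCoupling μ ν A := by
    refine IsCoupling.of_sum (fun u v => add_nonneg ?_ (hT u v)) (fun u => ?_) (fun v => ?_)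
    · split_ifs
      exacts [sub_nonneg.mpr (hrow u), le_rfl]
    · simp [A, Finset.sum_add_distrib]
    · simp [A, Finset.sum_add_distrib, hbal]
  have hcost : ∑ u, ∑ v, A u v * G.dist u v = ∑ u, ∑ v, T u v := by
    refine Finset.sum_congr rfl fun u _ => Finset.sum_congr rfl fun v _ => ?_
    rcases eq_or_ne u v with rfl | huv
    · simp [A, not_not.mp (mt (hTadj u u) G.irrefl)]
    · simp [A, huv, mul_dist_eq_self (hTadj u v)]
  rw [← hdual]
  exact W_eq_of_cost_eq hA (sub_le_dist_of_mem_Icc hG hf) (hcost.trans hdual.symm)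

theorem W_rw_of_twins (hG : G.Connected) {x y : V} (hxy : G.Adj x y)
    (hdeg : deg G x = deg G y) (htwin : ∀ w, w ≠ x → w ≠ y → (G.Adj x w ↔ G.Adj y w)) :
    W G (rw G x) (rw G y) = (deg G x : ℝ)⁻¹ := by
  set c : ℝ := (deg G x : ℝ)⁻¹
  have hrow : ∀ u, ∑ v, (if u = y ∧ v = x then c else 0) = if u = y then c else 0 := by
    intro u; by_cases hu : u = y <;> simp [hu]
  have hcol : ∀ v, ∑ u, (if u = y ∧ v = x then c else 0) = if v = x then c else 0 := by
    intro v; by_cases hv : v = x <;> simp [hv]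
  have hc : ∑ u, ∑ v, (if u = y ∧ v = x then c else 0) = c := by simp [hrow]
  rw [← hc]
  refine W_eq_of_transport hG _ (fun u => if u = y then 1 else 0) (fun u v => ?_) (fun u v h => ?_)
    (fun u => ?_) (fun u => ?_) (fun u => ?_) ?_
  · split_ifs <;> positivity
  · obtain ⟨rfl, rfl⟩ := (ite_ne_right_iff.mp h).1
    exact hxy.symm
  · rw [hrow]; split_ifs with hu
    · rw [hu, rw_of_adj hxy]
    · exact rw_nonneg x u
  · rw [hrow, hcol]
    rcases eq_or_ne u x with rfl | hux
    · simp [hxy.ne, rw_of_not_adj G.irrefl, rw_of_adj hxy.symm, c, hdeg]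
    rcases eq_or_ne u y with rfl | huy
    · simp [rw_of_not_adj G.irrefl, rw_of_adj hxy, c, hux]
    · simp only [hux, huy, if_false, sub_zero, rw, hdeg, htwin u hux huy]
  · split_ifs <;> simp
  · simp [hc, rw_of_adj hxy, rw_of_not_adj G.irrefl]
    rfl

theorem W_rw_of_extra_neighbor (hG : G.Connected) {x y z : V} (hxy : G.Adj x y)
    (hxz : G.Adj x z) (hyz : ¬G.Adj y z) (hzy : z ≠ y) (hdeg : deg G x = deg G y + 1)
    (hnbr : ∀ w, w ≠ x → w ≠ y → w ≠ z → (G.Adj x w ↔ G.Adj y w)) :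
    W G (rw G x) (rw G y) = 2 / deg G x := by
  set c : ℝ := (deg G x : ℝ)⁻¹
  have hcy : (deg G y : ℝ)⁻¹ - c * (deg G y : ℝ)⁻¹ = c := by
    have : (deg G y : ℝ) ≠ 0 := by
      rw [deg_eq_degree, Nat.cast_ne_zero]
      exact ((G.degree_pos_iff_exists_adj y).mpr ⟨x, hxy.symm⟩).ne'
    simp only [c, hdeg]; push_cast; field_simp; ring
  set T : V → V → ℝ := fun u v =>
    (if u = y then c * rw G y v else 0) + (if u = z ∧ v = x then c else 0)
  have hrow : ∀ u, ∑ v, T u v = (if u = y then c else 0) + (if u = z then c else 0) := by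
    intro u
    by_cases hu : u = y <;> by_cases hu' : u = z <;>
      simp [T, hu, hu', hzy.symm, Finset.sum_add_distrib, ← Finset.mul_sum, sum_rw hxy.symm]
  have hcol : ∀ v, ∑ u, T u v = c * rw G y v + (if v = x then c else 0) := by
    intro v
    by_cases hv : v = x <;> simp [T, hv, Finset.sum_add_distrib]
  have hT : ∑ u, ∑ v, T u v = 2 * c := by
    simp only [hrow, Finset.sum_add_distrib, Finset.sum_ite_eq', Finset.mem_univ, if_true]; ring
  rw [div_eq_mul_inv, ← hT]
  refine W_eq_of_transport hG T (fun u => (if u = y then 1 else 0) + (if u = z then 1 else 0))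
    (fun u v => ?_) (fun u v h => ?_) (fun u => ?_) (fun u => ?_) (fun u => ?_) ?_
  · have := rw_nonneg (G := G) y v
    simp only [T]; split_ifs <;> positivity
  · by_cases hu : u = y
    · subst hu
      obtain ⟨-, hne⟩ : c ≠ 0 ∧ rw G u v ≠ 0 := by simpa [T, hzy.symm] using h
      exact not_not.mp (mt rw_of_not_adj hne)
    · obtain ⟨rfl, rfl, -⟩ : u = z ∧ v = x ∧ c ≠ 0 := by simpa [T, hu] using h
      exact hxz.symm
  · rw [hrow]
    by_cases hu : u = y
    · simp [hu, hzy.symm, rw_of_adj hxy, c]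
    by_cases hu' : u = z
    · simp [hu', hzy, rw_of_adj hxz, c]
    · simpa [hu, hu'] using rw_nonneg x u
  · rw [hrow, hcol]
    rcases eq_or_ne u x with rfl | hux
    · simp only [hxy.ne, hxz.ne, rw_of_not_adj G.irrefl, rw_of_adj hxy.symm, if_false, if_true]
      linarith
    rcases eq_or_ne u y with rfl | huy
    · simp [hzy.symm, hux, rw_of_not_adj G.irrefl, rw_of_adj hxy, c]
    rcases eq_or_ne u z with rfl | huz
    · simp [hzy, hux, rw_of_not_adj hyz, rw_of_adj hxz, c]
    · by_cases hadj : G.Adj y u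
      · simp [hux, huy, huz, rw_of_adj hadj, rw_of_adj ((hnbr u hux huy huz).mpr hadj), hcy, c]
      · simp [hux, huy, huz, rw_of_not_adj hadj, rw_of_not_adj (mt (hnbr u hux huy huz).mp hadj)]
  · by_cases hu : u = y
    · simp [hu, hzy.symm]
    · split_ifs <;> simp
  · simp only [add_mul, Finset.sum_add_distrib, ite_mul, one_mul, zero_mul, Finset.sum_ite_eq',
      Finset.mem_univ, if_true, hT, rw_of_adj hxy, rw_of_adj hxz, rw_of_not_adj G.irrefl,
      rw_of_not_adj hyz]
    ring

end Transport

section Gluing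

variable {n m : ℕ}

@[simp] theorem glue_adj_inl_inl {i j : Fin n} : (glue n m).Adj (.inl i) (.inl j) ↔ i ≠ j :=
  Iff.rfl

@[simp] theorem glue_adj_inl_inr {i j : Fin n} : (glue n m).Adj (.inl i) (.inr j) ↔ cross m i j :=
  Iff.rfl

@[simp] theorem glue_adj_inr_inr {i j : Fin n} : (glue n m).Adj (.inr i) (.inr j) ↔ i ≠ j :=
  Iff.rfl

theorem cross_iff_of_pos {i j : Fin n} (hi : 1 ≤ (i : ℕ)) :
    cross m i j ↔ (j : ℕ) = 0 ∧ (i : ℕ) ≤ m := by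
  unfold cross; omega

theorem glue_connected [NeZero n] : (glue n m).Connected := by
  have hbase : ∀ w, (glue n m).Reachable (.inl 0) w := by
    have hcross : (glue n m).Adj (.inl 0) (.inr 0) := Or.inl ⟨rfl, rfl⟩
    rintro (i | i)
    · rcases eq_or_ne i 0 with rfl | hi
      · rfl
      · exact (glue_adj_inl_inl.mpr hi.symm).reachable
    · rcases eq_or_ne i 0 with rfl | hi
      · exact hcross.reachable
      · exact hcross.reachable.trans (glue_adj_inr_inr.mpr hi.symm).reachable
  exact ⟨fun u v => (hbase u).symm.trans (hbase v)⟩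

theorem neighborFinset_glue_inl (i : Fin n) :
    (glue n m).neighborFinset (.inl i) =
      (Finset.univ.erase i).disjSum (Finset.univ.filter (cross m i)) := by
  ext (j | j) <;> simp [eq_comm]

theorem deg_glue_inl (i : Fin n) :
    deg (glue n m) (.inl i) = n - 1 + (Finset.univ.filter (cross m i)).card := by
  rw [deg_eq_degree, ← SimpleGraph.card_neighborFinset_eq_degree, neighborFinset_glue_inl,
    Finset.card_disjSum, Finset.card_erase_of_mem (Finset.mem_univ i), Finset.card_univ,
    Fintype.card_fin]

theorem deg_glue_inl_of_le {i : Fin n} (hi : 1 ≤ (i : ℕ)) (him : (i : ℕ) ≤ m) :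
    deg (glue n m) (.inl i) = n := by
  have : NeZero n := NeZero.of_pos i.pos
  have hcross : Finset.univ.filter (cross m i) = {0} := by
    ext j
    rw [Finset.mem_filter, cross_iff_of_pos hi, Finset.mem_singleton, Fin.ext_iff, Fin.val_zero]
    simp [him]
  rw [deg_glue_inl, hcross, Finset.card_singleton]
  exact Nat.sub_add_cancel i.pos

theorem deg_glue_inl_of_lt {i : Fin n} (hmi : m < (i : ℕ)) : deg (glue n m) (.inl i) = n - 1 := by
  have hcross : Finset.univ.filter (cross m i) = ∅ :=
    Finset.filter_eq_empty_iff.mpr fun j _ h => by rw [cross_iff_of_pos (by omega)] at h; omega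
  rw [deg_glue_inl, hcross, Finset.card_empty, add_zero]

theorem glue_adj_inl_iff [NeZero n] {i j : Fin n} (hi : 1 ≤ (i : ℕ)) (hj : 1 ≤ (j : ℕ))
    {w : Fin n ⊕ Fin n} (hwi : w ≠ .inl i) (hwj : w ≠ .inl j)
    (hw : w = .inr 0 → ((i : ℕ) ≤ m ↔ (j : ℕ) ≤ m)) :
    (glue n m).Adj (.inl i) w ↔ (glue n m).Adj (.inl j) w := by
  rcases w with k | k
  · simp only [glue_adj_inl_inl]
    exact iff_of_true (fun h => hwi (congrArg _ h.symm)) (fun h => hwj (congrArg _ h.symm))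
  · simp only [glue_adj_inl_inr, cross_iff_of_pos hi, cross_iff_of_pos hj]
    by_cases hk : k = 0
    · simp [hk, hw (congrArg _ hk)]
    · simp [Fin.val_eq_zero_iff, hk]

theorem ricci_glue_of_le_of_le {i j : Fin n} (hi : 1 ≤ (i : ℕ)) (him : (i : ℕ) ≤ m)
    (hj : 1 ≤ (j : ℕ)) (hjm : (j : ℕ) ≤ m) (hij : i ≠ j) :
    ricci (glue n m) (.inl i) (.inl j) = 1 - (n : ℝ)⁻¹ := by
  have : NeZero n := NeZero.of_pos i.pos
  have hadj : (glue n m).Adj (.inl i) (.inl j) := hij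
  rw [ricci_eq_one_sub_W_of_adj hadj, W_rw_of_twins glue_connected hadj
    (by rw [deg_glue_inl_of_le hi him, deg_glue_inl_of_le hj hjm])
    (fun _ hwi hwj => glue_adj_inl_iff hi hj hwi hwj fun _ => iff_of_true him hjm),
    deg_glue_inl_of_le hi him]

theorem ricci_glue_of_lt_of_lt {i j : Fin n} (hmi : m < (i : ℕ)) (hmj : m < (j : ℕ))
    (hij : i ≠ j) :
    ricci (glue n m) (.inl i) (.inl j) = 1 - ((n : ℝ) - 1)⁻¹ := by
  have : NeZero n := NeZero.of_pos i.pos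
  have hadj : (glue n m).Adj (.inl i) (.inl j) := hij
  rw [ricci_eq_one_sub_W_of_adj hadj, W_rw_of_twins glue_connected hadj
    (by rw [deg_glue_inl_of_lt hmi, deg_glue_inl_of_lt hmj])
    (fun _ hwi hwj => glue_adj_inl_iff (by omega) (by omega) hwi hwj
      fun _ => iff_of_false (by omega) (by omega)),
    deg_glue_inl_of_lt hmi, Nat.cast_sub i.pos, Nat.cast_one]

theorem ricci_glue_of_le_of_lt {i j : Fin n} (hi : 1 ≤ (i : ℕ)) (him : (i : ℕ) ≤ m)
    (hmj : m < (j : ℕ)) :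
    ricci (glue n m) (.inl i) (.inl j) = 1 - 2 / n := by
  have : NeZero n := NeZero.of_pos i.pos
  have hadj : (glue n m).Adj (.inl i) (.inl j) := fun h => by rw [h] at him; omega
  have hdeg : deg (glue n m) (.inl i) = deg (glue n m) (.inl j) + 1 := by
    rw [deg_glue_inl_of_le hi him, deg_glue_inl_of_lt hmj, Nat.sub_add_cancel i.pos]
  rw [ricci_eq_one_sub_W_of_adj hadj, W_rw_of_extra_neighbor (z := .inr 0) glue_connected hadj
    (by simp [cross_iff_of_pos hi, him]) (by simp [cross_iff_of_pos (i := j) (by omega)]; omega)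
    (by simp) hdeg (fun _ hwi hwj hw0 => glue_adj_inl_iff hi (by omega) hwi hwj (absurd · hw0)),
    deg_glue_inl_of_le hi him]

end Gluing

end OR

theorem glue_ricci_inner_edges_general (n m : ℕ) :
    (∀ u₁ u₂ : Fin n, 1 ≤ (u₁ : ℕ) → (u₁ : ℕ) ≤ m → 1 ≤ (u₂ : ℕ) → (u₂ : ℕ) ≤ m → u₁ ≠ u₂ →
      OR.ricci (OR.glue n m) (Sum.inl u₁) (Sum.inl u₂) = ((n : ℝ) - 1) / n) ∧
    (∀ u₁ u' : Fin n, 1 ≤ (u₁ : ℕ) → (u₁ : ℕ) ≤ m → m < (u' : ℕ) →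
      OR.ricci (OR.glue n m) (Sum.inl u₁) (Sum.inl u') = ((n : ℝ) - 2) / n) ∧
    (∀ u' u'' : Fin n, m < (u' : ℕ) → m < (u'' : ℕ) → u' ≠ u'' →
      OR.ricci (OR.glue n m) (Sum.inl u') (Sum.inl u'') = ((n : ℝ) - 2) / ((n : ℝ) - 1)) := by
  refine ⟨fun u₁ u₂ h₁ h₁m h₂ h₂m hne => ?_, fun u₁ u' h₁ h₁m h' => ?_,
    fun u' u'' h' h'' hne => ?_⟩
  · have hn : (n : ℝ) ≠ 0 := Nat.cast_ne_zero.mpr u₁.pos.ne'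
    rw [OR.ricci_glue_of_le_of_le h₁ h₁m h₂ h₂m hne]
    field_simp
  · have hn : (n : ℝ) ≠ 0 := Nat.cast_ne_zero.mpr u₁.pos.ne'
    rw [OR.ricci_glue_of_le_of_lt h₁ h₁m h']
    field_simp
  · have hn : (n : ℝ) - 1 ≠ 0 :=
      sub_ne_zero.mpr (Nat.cast_ne_one.mpr (by have := Fin.val_ne_of_ne hne; omega))
    rw [OR.ricci_glue_of_lt_of_lt h' h'' hne]
    field_simp
    ring

theorem glue_ricci_inner_edges (n m : ℕ) (hn : 5 ≤ n) (hm : 1 ≤ m) (hm' : m ≤ n - 2) :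
    (∀ u₁ u₂ : Fin n, 1 ≤ (u₁ : ℕ) → (u₁ : ℕ) ≤ m → 1 ≤ (u₂ : ℕ) → (u₂ : ℕ) ≤ m → u₁ ≠ u₂ →
      OR.ricci (OR.glue n m) (Sum.inl u₁) (Sum.inl u₂) = ((n : ℝ) - 1) / n) ∧
    (∀ u₁ u' : Fin n, 1 ≤ (u₁ : ℕ) → (u₁ : ℕ) ≤ m → m < (u' : ℕ) →
      OR.ricci (OR.glue n m) (Sum.inl u₁) (Sum.inl u') = ((n : ℝ) - 2) / n) ∧
    (∀ u' u'' : Fin n, m < (u' : ℕ) → m < (u'' : ℕ) → u' ≠ u'' →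
      OR.ricci (OR.glue n m) (Sum.inl u') (Sum.inl u'') = ((n : ℝ) - 2) / ((n : ℝ) - 1)) :=
  glue_ricci_inner_edges_general n m
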